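/- Let W = ℝ^{d} and let Q be a probability measure on W with finite mean μ := E_{w∼Q}[w]. Fix γ ≥ 0, κ > 0, ρ ∈ [0,1], and η > 0. Assume: (i) Q({w : sup_{x∈X} max_{k∈{1,…,K}} |s_w(x,k) − s_μ(x,k)| ≤ γ/2}) ≥ 1 − ρ, and (ii) for every w ∈ W, x ∈ X, j ∈ {1,…,K}, Δ_w(x,j) ≤ γ implies g^w_{γ,κ}(x,j) ≥ η. Then WCR^{det}(μ;D') ≤ η^{−1} (1 + e^{γ}) · VWR_γ(Q;D') + ρ. -/

import Mathlib

/-!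
Fix a class `j` and a point `x` with `Δ_μ(x,j) ≤ 0`. For every `w` in the stable set (all scores
within `γ/2` of those of `μ`) we get `Δ_w(x,j) ≤ γ`; hence the gate is at least `η`, and some rival
class `k` has `s_w(x,k) ≥ s_w(x,j) - γ`, which forces the off-diagonal softmax mass `1 - p_w(j|x)` to be
at least `1/(1+e^γ)`. So the column-`j` error flow of `w` is at least `c := η/(1+e^γ)` on the
misclassified set, and two Markov inequalities (over `D'_j`, then over `Q`) give
`c · D'_j(Δ_μ ≤ 0) · Q(stable) ≤ ∑_{i ≠ j} M̄_{ij} ≤ VWR`. Since `Q(stable) ≥ 1 - ρ`, the claim follows.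
-/

open MeasureTheory

/-- Option margin: `Δ_s(y) = s(y) - max_{k ≠ y} s(k)`. -/
noncomputable def optionMargin {K : ℕ} (s : Fin K → ℝ) (y : Fin K) : ℝ :=
  s y - ⨆ k : {k : Fin K // k ≠ y}, s k.1

/-- Softmax probability `p_s(i) = exp(s i) / Σ_k exp(s k)`. -/
noncomputable def softmaxProb {K : ℕ} (s : Fin K → ℝ) (i : Fin K) : ℝ :=
  Real.exp (s i) / ∑ k : Fin K, Real.exp (s k)

/-- Margin gate `g_{γ,κ}(Δ) = σ((γ - Δ)/κ)` with the logistic sigmoid. -/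
noncomputable def gate (γ κ Δ : ℝ) : ℝ := 1 / (1 + Real.exp (-((γ - Δ) / κ)))

/-- Posterior-averaged margin-aware error-flow matrix `M̄^Q_{D',γ}`. -/
noncomputable def Mbar {X W : Type*} [MeasurableSpace X] [MeasurableSpace W] {K : ℕ}
    (D : Fin K → Measure X) (s : W → X → Fin K → ℝ) (γ κ : ℝ) (Q : Measure W) :
    Matrix (Fin K) (Fin K) ℝ := fun i j =>
  if i = j then 0
  else ∫ w, ∫ x, gate γ κ (optionMargin (s w x) j) * softmaxProb (s w x) i ∂(D j) ∂Q

/-- Vulnerable worst-option risk `VWR_γ(Q;D') = ‖M̄^Q_{D',γ}‖₁` (max column absolute sum). -/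
noncomputable def VWR {X W : Type*} [MeasurableSpace X] [MeasurableSpace W] {K : ℕ}
    (D : Fin K → Measure X) (s : W → X → Fin K → ℝ) (γ κ : ℝ) (Q : Measure W) : ℝ :=
  ⨆ j : Fin K, ∑ i : Fin K, |Mbar D s γ κ Q i j|

/-- Deterministic worst-class risk `WCR^{det}(μ;D') = max_j D'_j({x : Δ_μ(x,j) ≤ 0})`. -/
noncomputable def WCRdet {X W : Type*} [MeasurableSpace X] {K : ℕ}
    (D : Fin K → Measure X) (s : W → X → Fin K → ℝ) (μ : W) : ℝ :=
  ⨆ j : Fin K, ((D j) {x | optionMargin (s μ x) j ≤ 0}).toReal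

open Finset

instance nonempty_subtype_ne {α : Type*} [Nontrivial α] (a : α) : Nonempty {b : α // b ≠ a} :=
  nonempty_subtype.2 (exists_ne a)

section Scores

variable {K : ℕ}

lemma gate_nonneg (γ κ Δ : ℝ) : 0 ≤ gate γ κ Δ := by
  unfold gate; positivity

lemma gate_le_one (γ κ Δ : ℝ) : gate γ κ Δ ≤ 1 := by
  unfold gate
  rw [div_le_one (by positivity)]
  linarith [Real.exp_pos (-((γ - Δ) / κ))]

lemma measurable_gate (γ κ : ℝ) : Measurable (gate γ κ) := by
  unfold gate; fun_prop

lemma softmaxProb_nonneg (u : Fin K → ℝ) (i : Fin K) : 0 ≤ softmaxProb u i := by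
  unfold softmaxProb; positivity

lemma sum_softmaxProb [Nonempty (Fin K)] (u : Fin K → ℝ) : ∑ i, softmaxProb u i = 1 := by
  simp only [softmaxProb, ← Finset.sum_div]
  exact div_self (sum_pos (fun k _ => Real.exp_pos (u k)) univ_nonempty).ne'

lemma sum_erase_softmaxProb [Nonempty (Fin K)] (u : Fin K → ℝ) (j : Fin K) :
    ∑ i ∈ univ.erase j, softmaxProb u i = 1 - softmaxProb u j := by
  rw [sum_erase_eq_sub (mem_univ j), sum_softmaxProb]

lemma softmaxProb_le_one [Nonempty (Fin K)] (u : Fin K → ℝ) (i : Fin K) :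
    softmaxProb u i ≤ 1 := by
  linarith [sum_erase_softmaxProb u i,
    sum_nonneg fun k (_ : k ∈ univ.erase i) => softmaxProb_nonneg u k]

lemma softmaxProb_le_exp_mul {u : Fin K → ℝ} {i k : Fin K} {γ : ℝ} (h : u i ≤ u k + γ) :
    softmaxProb u i ≤ Real.exp γ * softmaxProb u k := by
  unfold softmaxProb
  rw [mul_div_assoc', ← Real.exp_add, add_comm γ]
  gcongr

lemma Measurable.optionMargin {α : Type*} [MeasurableSpace α] {f : α → Fin K → ℝ}
    (hf : ∀ k, Measurable fun a => f a k) (j : Fin K) :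
    Measurable fun a => _root_.optionMargin (f a) j :=
  (hf j).sub (Measurable.iSup fun k => hf k.1)

lemma Measurable.softmaxProb {α : Type*} [MeasurableSpace α] {f : α → Fin K → ℝ}
    (hf : ∀ k, Measurable fun a => f a k) (i : Fin K) :
    Measurable fun a => _root_.softmaxProb (f a) i :=
  (hf i).exp.div (Finset.measurable_sum _ fun k _ => (hf k).exp)

lemma measurable_gate_mul_softmaxProb {α : Type*} [MeasurableSpace α] {f : α → Fin K → ℝ}
    (hf : ∀ k, Measurable fun a => f a k) (γ κ : ℝ) (i j : Fin K) :
    Measurable fun a => gate γ κ (optionMargin (f a) j) * softmaxProb (f a) i :=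
  ((measurable_gate γ κ).comp (Measurable.optionMargin hf j)).mul (Measurable.softmaxProb hf i)

lemma optionMargin_le_add {u v : Fin K → ℝ} {ε : ℝ} [Nontrivial (Fin K)]
    (h : ∀ k, |u k - v k| ≤ ε) (j : Fin K) :
    optionMargin u j ≤ optionMargin v j + 2 * ε := by
  have hj : u j ≤ v j + ε := by linarith [(abs_le.mp (h j)).2]
  have hsup : ⨆ k : {k // k ≠ j}, v k ≤ (⨆ k : {k // k ≠ j}, u k) + ε :=
    ciSup_le fun k => by
      linarith [(abs_le.mp (h k)).1, le_ciSup (Finite.bddAbove_range fun k : {k // k ≠ j} => u k) k]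
  unfold optionMargin
  linarith

lemma exists_ne_le_add_of_optionMargin_le [Nontrivial (Fin K)] {u : Fin K → ℝ} {j : Fin K}
    {γ : ℝ} (h : optionMargin u j ≤ γ) : ∃ k ≠ j, u j ≤ u k + γ := by
  obtain ⟨k, hk⟩ := exists_eq_ciSup_of_finite (f := fun k : {k // k ≠ j} => u k)
  refine ⟨k, k.2, ?_⟩
  unfold optionMargin at h
  linarith

lemma inv_one_add_exp_le_one_sub_softmaxProb [Nontrivial (Fin K)] {u : Fin K → ℝ} {j : Fin K}
    {γ : ℝ} (h : optionMargin u j ≤ γ) : (1 + Real.exp γ)⁻¹ ≤ 1 - softmaxProb u j := by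
  obtain ⟨k, hkj, hk⟩ := exists_ne_le_add_of_optionMargin_le h
  have hpj := softmaxProb_le_exp_mul hk
  have hpk : softmaxProb u k ≤ 1 - softmaxProb u j := by
    rw [← sum_erase_softmaxProb]
    exact single_le_sum (fun i _ => softmaxProb_nonneg u i) (mem_erase.2 ⟨hkj, mem_univ k⟩)
  have hE := Real.exp_pos γ
  rw [inv_le_iff_one_le_mul₀ (by positivity)]
  nlinarith

/-- Averaged over `x ∼ D'_j` and `w ∼ Q`, this is the `j`-th column sum of `Mbar`. -/
noncomputable def columnErrorFlow (γ κ : ℝ) (u : Fin K → ℝ) (j : Fin K) : ℝ :=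
  ∑ i ∈ univ.erase j, gate γ κ (optionMargin u j) * softmaxProb u i

lemma columnErrorFlow_eq [Nonempty (Fin K)] (γ κ : ℝ) (u : Fin K → ℝ) (j : Fin K) :
    columnErrorFlow γ κ u j = gate γ κ (optionMargin u j) * (1 - softmaxProb u j) := by
  rw [columnErrorFlow, ← mul_sum, sum_erase_softmaxProb]

lemma columnErrorFlow_nonneg [Nonempty (Fin K)] (γ κ : ℝ) (u : Fin K → ℝ) (j : Fin K) :
    0 ≤ columnErrorFlow γ κ u j := by
  rw [columnErrorFlow_eq]
  exact mul_nonneg (gate_nonneg _ _ _) (by linarith [softmaxProb_le_one u j])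

lemma columnErrorFlow_le_one [Nonempty (Fin K)] (γ κ : ℝ) (u : Fin K → ℝ) (j : Fin K) :
    columnErrorFlow γ κ u j ≤ 1 := by
  rw [columnErrorFlow_eq]
  exact mul_le_one₀ (gate_le_one _ _ _) (by linarith [softmaxProb_le_one u j])
    (by linarith [softmaxProb_nonneg u j])

lemma div_one_add_exp_le_columnErrorFlow [Nontrivial (Fin K)] {γ κ η : ℝ} {u : Fin K → ℝ}
    {j : Fin K} (hΔ : optionMargin u j ≤ γ)
    (hgate : η ≤ gate γ κ (optionMargin u j)) :
    η / (1 + Real.exp γ) ≤ columnErrorFlow γ κ u j := by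
  have htail := inv_one_add_exp_le_one_sub_softmaxProb hΔ
  rw [columnErrorFlow_eq, div_eq_mul_inv]
  exact mul_le_mul hgate htail (by positivity) (gate_nonneg _ _ _)

end Scores

section Integration

variable {W X : Type*} [MeasurableSpace W] [MeasurableSpace X]

lemma mul_measureReal_le_integral_of_le_on {μ : Measure X} [IsFiniteMeasure μ] {f : X → ℝ}
    {S : Set X} {c : ℝ} (hc : 0 ≤ c) (hf0 : 0 ≤ᵐ[μ] f) (hf : Integrable f μ)
    (hS : ∀ x ∈ S, c ≤ f x) : c * μ.real S ≤ ∫ x, f x ∂μ :=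
  (mul_le_mul_of_nonneg_left (measureReal_mono hS) hc).trans
    (mul_meas_ge_le_integral_of_nonneg hf0 hf c)

lemma integrable_prod_mk_left_of_norm_le {ν : Measure X} [IsFiniteMeasure ν] {F : W × X → ℝ}
    (hF : Measurable F) {C : ℝ} (hC : ∀ p, ‖F p‖ ≤ C) (w : W) :
    Integrable (fun x => F (w, x)) ν :=
  Integrable.of_bound (hF.comp measurable_prodMk_left).aestronglyMeasurable C
    (ae_of_all _ fun _ => hC _)

lemma integrable_integral_prod_right_of_norm_le {Q : Measure W} {ν : Measure X}
    [IsFiniteMeasure Q] [IsFiniteMeasure ν] {F : W × X → ℝ} (hF : Measurable F) {C : ℝ}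
    (hC : ∀ p, ‖F p‖ ≤ C) : Integrable (fun w => ∫ x, F (w, x) ∂ν) Q :=
  (Integrable.of_bound hF.aestronglyMeasurable C (ae_of_all _ hC)).integral_prod_left

lemma sum_le_iSup_sum_abs {ι : Type*} [Fintype ι] (M : Matrix ι ι ℝ) (s : Finset ι) (j : ι) :
    ∑ i ∈ s, M i j ≤ ⨆ j, ∑ i, |M i j| :=
  calc ∑ i ∈ s, M i j ≤ ∑ i ∈ s, |M i j| := sum_le_sum fun _ _ => le_abs_self _
    _ ≤ ∑ i, |M i j| := sum_le_sum_of_subset_of_nonneg (subset_univ s) fun _ _ _ => abs_nonneg _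
    _ ≤ ⨆ j, ∑ i, |M i j| := le_ciSup (Finite.bddAbove_range fun j => ∑ i, |M i j|) j

variable {K : ℕ} [Nonempty (Fin K)] {D : Fin K → Measure X} {s : W → X → Fin K → ℝ}
  {Q : Measure W} [IsFiniteMeasure Q]

lemma sum_erase_Mbar_eq_integral (hs : ∀ k, Measurable fun p : W × X => s p.1 p.2 k)
    (γ κ : ℝ) (j : Fin K) [IsFiniteMeasure (D j)] :
    ∑ i ∈ univ.erase j, Mbar D s γ κ Q i j
      = ∫ w, ∫ x, columnErrorFlow γ κ (s w x) j ∂D j ∂Q := by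
  set F : Fin K → W × X → ℝ := fun i p =>
    gate γ κ (optionMargin (s p.1 p.2) j) * softmaxProb (s p.1 p.2) i
  have hF : ∀ i, Measurable (F i) := fun i => measurable_gate_mul_softmaxProb hs γ κ i j
  have hF_le : ∀ i p, ‖F i p‖ ≤ 1 := fun i p => by
    rw [Real.norm_eq_abs, abs_of_nonneg (mul_nonneg (gate_nonneg _ _ _) (softmaxProb_nonneg _ _))]
    exact mul_le_one₀ (gate_le_one _ _ _) (softmaxProb_nonneg _ _) (softmaxProb_le_one _ _)
  have hinner : ∀ w, ∫ x, columnErrorFlow γ κ (s w x) j ∂D j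
      = ∑ i ∈ univ.erase j, ∫ x, F i (w, x) ∂D j := fun w =>
    integral_finsetSum _ fun i _ => integrable_prod_mk_left_of_norm_le (hF i) (hF_le i) w
  simp_rw [hinner]
  rw [integral_finsetSum _ fun i _ => integrable_integral_prod_right_of_norm_le (hF i) (hF_le i)]
  refine sum_congr rfl fun i hi => ?_
  simp [Mbar, (mem_erase.1 hi).1, F]

end Integration

section Bridge

variable {W X : Type*} [MeasurableSpace W] [MeasurableSpace X] {K : ℕ} [Nontrivial (Fin K)]
  {D : Fin K → Measure X} [∀ j, IsProbabilityMeasure (D j)] {s : W → X → Fin K → ℝ}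
  {Q : Measure W} [IsProbabilityMeasure Q] {γ κ ρ η : ℝ}

lemma le_add_of_mul_le {a q ρ B : ℝ} (ha : a ≤ 1) (hq : 1 - ρ ≤ q) (hq1 : q ≤ 1)
    (h : a * q ≤ B) : a ≤ B + ρ := by
  nlinarith

lemma measureReal_margin_nonpos_le (hs : ∀ k, Measurable fun p : W × X => s p.1 p.2 k)
    (hη : 0 < η) (μ : W)
    (hstab : 1 - ρ ≤ Q.real {w | ∀ (x : X) (k : Fin K), |s w x k - s μ x k| ≤ γ / 2})
    (hgate : ∀ (w : W) (x : X) (j : Fin K),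
      optionMargin (s w x) j ≤ γ → η ≤ gate γ κ (optionMargin (s w x) j))
    (j : Fin K) :
    (D j).real {x | optionMargin (s μ x) j ≤ 0}
      ≤ η⁻¹ * (1 + Real.exp γ) * ∑ i ∈ univ.erase j, Mbar D s γ κ Q i j + ρ := by
  set c := η / (1 + Real.exp γ)
  have hc : 0 < c := by positivity
  have hflow_meas : Measurable fun p : W × X => columnErrorFlow γ κ (s p.1 p.2) j :=
    Finset.measurable_sum _ fun i _ => measurable_gate_mul_softmaxProb hs γ κ i j
  have hflow_le : ∀ p : W × X, ‖columnErrorFlow γ κ (s p.1 p.2) j‖ ≤ 1 := fun p => by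
    rw [Real.norm_eq_abs, abs_of_nonneg (columnErrorFlow_nonneg _ _ _ _)]
    exact columnErrorFlow_le_one _ _ _ _
  have hstable : ∀ w ∈ {w | ∀ (x : X) (k : Fin K), |s w x k - s μ x k| ≤ γ / 2},
      c * (D j).real {x | optionMargin (s μ x) j ≤ 0} ≤ ∫ x, columnErrorFlow γ κ (s w x) j ∂D j :=
    fun w hw => mul_measureReal_le_integral_of_le_on hc.le
      (ae_of_all _ fun x => columnErrorFlow_nonneg _ _ _ _)
      (integrable_prod_mk_left_of_norm_le hflow_meas hflow_le w) fun x hx => by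
        have hΔ : optionMargin (s w x) j ≤ γ := by
          linarith [optionMargin_le_add (hw x) j, show optionMargin (s μ x) j ≤ 0 from hx]
        exact div_one_add_exp_le_columnErrorFlow hΔ (hgate w x j hΔ)
  have hmarkov := mul_measureReal_le_integral_of_le_on (μ := Q) (by positivity)
    (ae_of_all _ fun w => integral_nonneg fun x => columnErrorFlow_nonneg _ _ _ _)
    (integrable_integral_prod_right_of_norm_le hflow_meas hflow_le) hstable
  rw [← sum_erase_Mbar_eq_integral hs, mul_assoc] at hmarkov
  refine le_add_of_mul_le measureReal_le_one hstab measureReal_le_one ?_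
  rwa [show η⁻¹ * (1 + Real.exp γ) = c⁻¹ by rw [inv_div, div_eq_inv_mul], le_inv_mul_iff₀ hc]

end Bridge

theorem deterministic_bridge_vulnerable_general {X : Type*} [MeasurableSpace X] {K d : ℕ}
    (hK : 2 ≤ K)
    (D : Fin K → Measure X) (hD : ∀ j, IsProbabilityMeasure (D j))
    (s : (Fin d → ℝ) → X → Fin K → ℝ)
    (hs : ∀ k : Fin K, Measurable fun p : (Fin d → ℝ) × X => s p.1 p.2 k)
    (γ κ ρ η : ℝ) (hη : 0 < η)
    (Q : Measure (Fin d → ℝ)) (hQ : IsProbabilityMeasure Q)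
    (μmean : Fin d → ℝ)
    (hstab : 1 - ρ ≤
      (Q {w | ∀ (x : X) (k : Fin K), |s w x k - s μmean x k| ≤ γ / 2}).toReal)
    (hgate : ∀ (w : Fin d → ℝ) (x : X) (j : Fin K),
      optionMargin (s w x) j ≤ γ → η ≤ gate γ κ (optionMargin (s w x) j)) :
    WCRdet D s μmean ≤ η⁻¹ * (1 + Real.exp γ) * VWR D s γ κ Q + ρ := by
  have : Nontrivial (Fin K) := Fin.nontrivial_iff_two_le.2 hK
  refine ciSup_le fun j => ?_
  calc ((D j) {x | optionMargin (s μmean x) j ≤ 0}).toReal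
      ≤ η⁻¹ * (1 + Real.exp γ) * ∑ i ∈ univ.erase j, Mbar D s γ κ Q i j + ρ :=
        measureReal_margin_nonpos_le hs hη μmean hstab hgate j
    _ ≤ η⁻¹ * (1 + Real.exp γ) * VWR D s γ κ Q + ρ := by
        gcongr
        exact sum_le_iSup_sum_abs _ _ j

/-- Deterministic bridge under logit stability and a gate lower bound:
`WCR^{det}(μ;D') ≤ η⁻¹ (1+e^γ) VWR_γ(Q;D') + ρ`. -/
theorem deterministic_bridge_vulnerable {X : Type*} [MeasurableSpace X] {K d : ℕ}
    (hK : 2 ≤ K)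
    (D : Fin K → Measure X) (hD : ∀ j, IsProbabilityMeasure (D j))
    (s : (Fin d → ℝ) → X → Fin K → ℝ)
    (hs : ∀ k : Fin K, Measurable fun p : (Fin d → ℝ) × X => s p.1 p.2 k)
    (γ κ ρ η : ℝ) (hγ : 0 ≤ γ) (hκ : 0 < κ) (hρ0 : 0 ≤ ρ) (hρ1 : ρ ≤ 1) (hη : 0 < η)
    (Q : Measure (Fin d → ℝ)) (hQ : IsProbabilityMeasure Q)
    (hint : Integrable (fun w => w) Q)
    (μmean : Fin d → ℝ) (hμ : μmean = ∫ w, w ∂Q)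
    (hstab : 1 - ρ ≤
      (Q {w | ∀ (x : X) (k : Fin K), |s w x k - s μmean x k| ≤ γ / 2}).toReal)
    (hgate : ∀ (w : Fin d → ℝ) (x : X) (j : Fin K),
      optionMargin (s w x) j ≤ γ → η ≤ gate γ κ (optionMargin (s w x) j)) :
    WCRdet D s μmean ≤ η⁻¹ * (1 + Real.exp γ) * VWR D s γ κ Q + ρ :=
  deterministic_bridge_vulnerable_general hK D hD s hs γ κ ρ η hη Q hQ μmean hstab hgate
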